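/- arXiv:nlin/0004021 — 4 statements merged into one kernel-verified Lean document; each statement's English description precedes it below -/
import Mathlib

section
/- A complex symmetric unitary matrix u can be written as u = v d vᵀ where v is a real orthogonal matrix and d is a diagonal unitary matrix. -/
/-!
Write `u = A + i B` with `A`, `B` real. Symmetry of `u` makes `A` and `B` symmetric, so
`uᴴ = ū` and unitarity reads `(A + i B)(A - i B) = 1`, i.e. `A² + B² = 1` and `AB = BA`.
Commuting real symmetric matrices have a common orthonormal eigenbasis, which gives a real
orthogonal `P` with `A = P diag(α) Pᵀ` and `B = P diag(β) Pᵀ`. Then `u = P diag(α + i β) Pᵀ`,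
and `A² + B² = 1` becomes `α² + β² = 1`.
-/

open Matrix Module.End Complex

namespace LinearMap.IsSymmetric

variable {𝕜 E : Type*} [RCLike 𝕜] [NormedAddCommGroup E] [InnerProductSpace 𝕜 E]
  [FiniteDimensional 𝕜 E]

theorem exists_orthonormalBasis_eigenvectors_of_commute {ι : Type*} [Fintype ι]
    (hι : Fintype.card ι = Module.finrank 𝕜 E) {S T : E →ₗ[𝕜] E}
    (hS : S.IsSymmetric) (hT : T.IsSymmetric) (hST : Commute S T) :
    ∃ (b : OrthonormalBasis ι 𝕜 E) (α β : ι → 𝕜),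
      ∀ i, S (b i) = α i • b i ∧ T (b i) = β i • b i := by
  classical
  let V : 𝕜 × 𝕜 → Submodule 𝕜 E := fun p => eigenspace S p.2 ⊓ eigenspace T p.1
  have hV : DirectSum.IsInternal V := directSum_isInternal_of_commute hS hT hST
  -- `subordinateOrthonormalBasis` needs a finite index set: keep the nonzero joint eigenspaces
  let P := {p : 𝕜 × 𝕜 // V p ≠ ⊥}
  have : Fintype P := (Submodule.finite_ne_bot_of_iSupIndep hV.submodule_iSupIndep).fintype
  have hVP : DirectSum.IsInternal fun p : P => V p := DirectSum.isInternal_ne_bot_iff.mpr hV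
  have hfam : OrthogonalFamily 𝕜 (fun p : P => V p) fun p => (V p).subtypeₗᵢ :=
    fun p q hpq => orthogonalFamily_eigenspace_inf_eigenspace hS hT (Subtype.coe_ne_coe.mpr hpq)
  let e := Fintype.equivFinOfCardEq hι
  let μ := fun i => (hVP.subordinateOrthonormalBasisIndex rfl (e i) hfam).1
  refine ⟨(hVP.subordinateOrthonormalBasis rfl hfam).reindex e.symm, fun i => (μ i).2,
    fun i => (μ i).1, fun i => ?_⟩
  have hmem := hVP.subordinateOrthonormalBasis_subordinate rfl (e i) hfam
  rw [OrthonormalBasis.reindex_apply, Equiv.symm_symm]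
  exact ⟨mem_eigenspace_iff.mp hmem.1, mem_eigenspace_iff.mp hmem.2⟩

end LinearMap.IsSymmetric

namespace Matrix.IsHermitian

variable {𝕜 n : Type*} [RCLike 𝕜] [Fintype n] [DecidableEq n] {A B : Matrix n n 𝕜}

theorem exists_unitary_diagonal_of_commute (hA : A.IsHermitian) (hB : B.IsHermitian)
    (hAB : Commute A B) :
    ∃ (U : unitaryGroup n 𝕜) (α β : n → 𝕜),
      A = Unitary.conjStarAlgAut 𝕜 _ U (diagonal α) ∧
        B = Unitary.conjStarAlgAut 𝕜 _ U (diagonal β) := by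
  obtain ⟨b, α, β, hb⟩ :=
    (isSymmetric_toEuclideanLin_iff.mpr hA).exists_orthonormalBasis_eigenvectors_of_commute
      finrank_euclideanSpace.symm (isSymmetric_toEuclideanLin_iff.mpr hB)
      (hAB.map (toLpLinAlgEquiv 2))
  let U : unitaryGroup n 𝕜 := ⟨(EuclideanSpace.basisFun n 𝕜).toBasis.toMatrix b.toBasis,
    (EuclideanSpace.basisFun n 𝕜).toMatrix_orthonormalBasis_mem_unitary b⟩
  have eq_conj_diagonal : ∀ (M : Matrix n n 𝕜) (γ : n → 𝕜),
      (∀ j, toEuclideanLin M (b j) = γ j • b j) →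
        M = Unitary.conjStarAlgAut 𝕜 _ U (diagonal γ) := by
    intro M γ hγ
    have hMU : M * U = U * diagonal γ := by
      ext i j
      rw [mul_diagonal]
      simpa [U, Module.Basis.toMatrix_apply, mul_apply, mulVec, dotProduct, mul_comm] using
        congr($(hγ j) i)
    rw [Unitary.conjStarAlgAut_apply, ← hMU, mul_assoc, Unitary.mul_star_self_of_mem U.2,
      mul_one]
  exact ⟨U, α, β, eq_conj_diagonal A α fun j => (hb j).1,
    eq_conj_diagonal B β fun j => (hb j).2⟩

end Matrix.IsHermitian

namespace Matrix

variable {l m n : Type*}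

theorem map_re_add_I_smul_map_im (u : Matrix m n ℂ) :
    (u.map re).map ofRealHom + I • (u.map im).map ofRealHom = u := by
  ext i j
  apply Complex.ext <;> simp

theorem map_ofReal_add_I_smul_inj {X Y X' Y' : Matrix m n ℝ} :
    X.map ofRealHom + I • Y.map ofRealHom = X'.map ofRealHom + I • Y'.map ofRealHom ↔
      X = X' ∧ Y = Y' := by
  refine ⟨fun h => ⟨?_, ?_⟩, fun h => by rw [h.1, h.2]⟩ <;> ext i j
  · simpa using congr(($h i j).re)
  · simpa using congr(($h i j).im)

theorem map_ofReal_add_I_smul_mul [Fintype m] (X Y : Matrix l m ℝ) (X' Y' : Matrix m n ℝ) :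
    (X.map ofRealHom + I • Y.map ofRealHom) * (X'.map ofRealHom + I • Y'.map ofRealHom) =
      (X * X' - Y * Y').map ofRealHom + I • (X * Y' + Y * X').map ofRealHom := by
  simp only [Matrix.map_sub _ (map_sub ofRealHom), Matrix.map_add _ (map_add ofRealHom),
    Matrix.map_mul, Matrix.add_mul, Matrix.mul_add, Matrix.smul_mul, Matrix.mul_smul]
  match_scalars <;> simp

theorem mul_map_conj_eq_one_iff [Fintype n] [DecidableEq n] {u : Matrix n n ℂ} :
    u * u.map (starRingEnd ℂ) = 1 ↔
      u.map re * u.map re + u.map im * u.map im = 1 ∧ Commute (u.map re) (u.map im) := by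
  have hconj : u.map (starRingEnd ℂ) =
      (u.map re).map ofRealHom + I • (-u.map im).map ofRealHom := by
    ext i j
    apply Complex.ext <;> simp
  have hone : (1 : Matrix n n ℂ) =
      (1 : Matrix n n ℝ).map ofRealHom + I • (0 : Matrix n n ℝ).map ofRealHom := by
    simp
  nth_rw 1 [← map_re_add_I_smul_map_im u]
  rw [hconj, map_ofReal_add_I_smul_mul, hone, map_ofReal_add_I_smul_inj, commute_iff_eq,
    mul_neg, mul_neg, sub_neg_eq_add, neg_add_eq_zero]

end Matrix

/-- A complex symmetric unitary matrix `u` can be written as `u = v * d * vᵀ`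
where `v` is a real orthogonal matrix and `d` is a diagonal matrix whose
diagonal entries have modulus 1. -/
theorem symmetric_unitary_eq_real_orthogonal_diag
    (n : ℕ) (u : Matrix (Fin n) (Fin n) ℂ)
    (hsymm : u = uᵀ)
    (hunit : u * (u.map (starRingEnd ℂ))ᵀ = 1) :
    ∃ v d : Matrix (Fin n) (Fin n) ℂ,
      (∀ i j, (v i j).im = 0) ∧
      v * vᵀ = 1 ∧
      d.IsDiag ∧
      (∀ i, ‖d i i‖ = 1) ∧
      u = v * d * vᵀ := by
  have hu : u * u.map (starRingEnd ℂ) = 1 := by rwa [← transpose_map, ← hsymm] at hunit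
  obtain ⟨hsq, hcomm⟩ := mul_map_conj_eq_one_iff.mp hu
  obtain ⟨P, α, β, hA, hB⟩ :=
    (isHermitian_iff_isSymm.mpr (IsSymm.map hsymm.symm re)).exists_unitary_diagonal_of_commute
      (isHermitian_iff_isSymm.mpr (IsSymm.map hsymm.symm im)) hcomm
  have hαβ : ∀ i, α i * α i + β i * β i = 1 := by
    have h : diagonal α * diagonal α + diagonal β * diagonal β = 1 :=
      (Unitary.conjStarAlgAut ℝ _ P).injective <| by
        rw [map_one, ← hsq, hA, hB, map_add, map_mul, map_mul]; rfl
    simpa [diagonal_mul_diagonal, funext_iff] using h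
  have hPt : (star P : Matrix (Fin n) (Fin n) ℝ) = (P : Matrix (Fin n) (Fin n) ℝ)ᵀ := by
    rw [star_eq_conjTranspose, conjTranspose_eq_transpose_of_trivial]
  have hd : (diagonal α).map ofRealHom + I • (diagonal β).map ofRealHom =
      diagonal fun i => ⟨α i, β i⟩ := by
    ext i j
    apply Complex.ext <;> by_cases h : i = j <;> simp [h]
  refine ⟨(P : Matrix (Fin n) (Fin n) ℝ).map ofRealHom, diagonal fun i => ⟨α i, β i⟩,
    fun i j => by simp, ?_, isDiag_diagonal _, fun i => ?_, ?_⟩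
  · rw [← transpose_map, ← Matrix.map_mul, ← hPt, Unitary.mul_star_self_of_mem P.2,
      Matrix.map_one _ (map_zero _) (map_one _)]
  · rw [diagonal_apply_eq, Complex.norm_def, normSq_mk, hαβ, Real.sqrt_one]
  · rw [← map_re_add_I_smul_map_im u, hA, hB, ← hd, Unitary.conjStarAlgAut_apply,
      Unitary.conjStarAlgAut_apply, hPt]
    simp only [Matrix.map_mul, mul_add, add_mul, mul_smul_comm, smul_mul_assoc, transpose_map]
end

section
/- Suppose ψ = (ψ_{iα}) is a smooth n×n matrix-valued function satisfying ∂_k ψ_{ij} = γ_{ik} ψ_{kj} for k ≠ i and Σ_k ∂_k ψ_{ij} = 0, where γ_{ij} solves the Darboux–Egoroff system. If at one point Σ_i ψ_{iα} ψ_{iβ} = δ_{αβ}, then Σ_i ψ_{iα}(u) ψ_{iβ}(u) = δ_{αβ} for all u in the (connected) domain. -/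
open Finset

noncomputable section

/-- The partial derivative `∂_k f` of a function on `ℝⁿ`. -/
def pd {n : ℕ} (k : Fin n) (f : (Fin n → ℝ) → ℝ) (x : Fin n → ℝ) : ℝ :=
  fderiv ℝ f x (Pi.single k 1)

/-- A continuous linear functional vanishing on the standard basis is zero. -/
lemma clm_eq_zero_of_single {n : ℕ} (L : (Fin n → ℝ) →L[ℝ] ℝ)
    (h : ∀ k, L (Pi.single k 1) = 0) : L = 0 := by
  ext v
  have hv : v = ∑ k, (v k) • (Pi.single k 1 : Fin n → ℝ) := by
    conv_lhs => rw [← Finset.univ_sum_single v]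
    exact Finset.sum_congr rfl fun k _ => by
      rw [← Pi.single_smul, smul_eq_mul, mul_one]
  rw [hv]
  simp [h]

/-- A function with vanishing `fderiv` on an open preconnected set is constant. -/
lemma const_of_fderiv_zero {n : ℕ} {U : Set (Fin n → ℝ)} (hU : IsOpen U)
    (hconn : IsPreconnected U) (f : (Fin n → ℝ) → ℝ)
    (hdiff : ∀ x ∈ U, DifferentiableAt ℝ f x)
    (hzero : ∀ x ∈ U, fderiv ℝ f x = 0)
    {x₀ : Fin n → ℝ} (hx₀ : x₀ ∈ U) : ∀ u ∈ U, f u = f x₀ := by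
  -- local constancy
  have hloc : ∀ x ∈ U, ∀ᶠ y in nhds x, f y = f x := by
    intro x hx
    obtain ⟨ε, hε, hball⟩ := Metric.isOpen_iff.1 hU x hx
    refine Filter.eventually_of_mem (Metric.ball_mem_nhds x hε) fun y hy => ?_
    have hconv : Convex ℝ (Metric.ball x ε) := convex_ball x ε
    have hdo : DifferentiableOn ℝ f (Metric.ball x ε) := fun z hz =>
      (hdiff z (hball hz)).differentiableWithinAt
    exact hconv.is_const_of_fderivWithin_eq_zero hdo
      (fun z hz => by
        rw [fderivWithin_of_isOpen Metric.isOpen_ball hz]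
        exact hzero z (hball hz)) hy (Metric.mem_ball_self hε)
  set S : Set (Fin n → ℝ) := {x | x ∈ U ∧ f x = f x₀} with hS
  set T : Set (Fin n → ℝ) := {x | x ∈ U ∧ f x ≠ f x₀} with hT
  have hSopen : IsOpen S := by
    rw [Metric.isOpen_iff]
    intro x hx
    obtain ⟨ε, hε, hball⟩ := Metric.isOpen_iff.1 hU x hx.1
    obtain ⟨t, htn, ht⟩ := (hloc x hx.1).exists_mem
    obtain ⟨δ, hδ, hδball⟩ := Metric.mem_nhds_iff.1 htn
    refine ⟨min ε δ, lt_min hε hδ, fun y hy => ?_⟩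
    have hy1 : y ∈ Metric.ball x ε := Metric.ball_subset_ball (min_le_left _ _) hy
    have hy2 : y ∈ Metric.ball x δ := Metric.ball_subset_ball (min_le_right _ _) hy
    exact ⟨hball hy1, (ht y (hδball hy2)).trans hx.2⟩
  have hTopen : IsOpen T := by
    rw [Metric.isOpen_iff]
    intro x hx
    obtain ⟨ε, hε, hball⟩ := Metric.isOpen_iff.1 hU x hx.1
    obtain ⟨t, htn, ht⟩ := (hloc x hx.1).exists_mem
    obtain ⟨δ, hδ, hδball⟩ := Metric.mem_nhds_iff.1 htn
    refine ⟨min ε δ, lt_min hε hδ, fun y hy => ?_⟩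
    have hy1 : y ∈ Metric.ball x ε := Metric.ball_subset_ball (min_le_left _ _) hy
    have hy2 : y ∈ Metric.ball x δ := Metric.ball_subset_ball (min_le_right _ _) hy
    exact ⟨hball hy1, (ht y (hδball hy2)) ▸ hx.2⟩
  have hsub : U ⊆ S :=
    hconn.subset_left_of_subset_union hSopen hTopen
      (by
        rw [Set.disjoint_left]
        rintro a ⟨_, ha⟩ ⟨_, ha'⟩
        exact ha' ha)
      (fun x hx => by by_cases h : f x = f x₀ <;> [exact Or.inl ⟨hx, h⟩; exact Or.inr ⟨hx, h⟩])
      ⟨x₀, hx₀, hx₀, rfl⟩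
  exact fun u hu => (hsub hu).2

/-- Let `γ_{ij}` (`i ≠ j`) be a symmetric solution of the Darboux–Egoroff
system on a connected open `U ⊆ ℝⁿ` and let the smooth matrix-valued function
`ψ = (ψ_{iα})` satisfy `∂_k ψ_{ij} = γ_{ik} ψ_{kj}` (`k ≠ i`) and
`Σ_k ∂_k ψ_{ij} = 0`.  If at one point `Σ_i ψ_{iα} ψ_{iβ} = δ_{αβ}`, then
`Σ_i ψ_{iα}(u) ψ_{iβ}(u) = δ_{αβ}` for all `u ∈ U`; i.e.
`η_{αβ} = Σ_i ψ_{iα} ψ_{iβ}` is constant on `U`. -/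
theorem psi_orthonormality_propagates
    (n : ℕ) (U : Set (Fin n → ℝ)) (hU : IsOpen U) (hconn : IsPreconnected U)
    (γ : Fin n → Fin n → (Fin n → ℝ) → ℝ)
    (ψ : Fin n → Fin n → (Fin n → ℝ) → ℝ)
    (hsymm : ∀ i j, i ≠ j → ∀ x ∈ U, γ i j x = γ j i x)
    (hDE : ∀ i j k, i ≠ j → j ≠ k → i ≠ k → ∀ x ∈ U,
      pd k (γ i j) x = γ i k x * γ k j x)
    (hsum0 : ∀ i j, i ≠ j → ∀ x ∈ U, ∑ k, pd k (γ i j) x = 0)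
    (hψsmooth : ∀ i j, ContDiffOn ℝ (⊤ : ℕ∞) (ψ i j) U)
    (hψdiff : ∀ i j, ∀ x ∈ U, DifferentiableAt ℝ (ψ i j) x)
    (hψ : ∀ i j k, k ≠ i → ∀ x ∈ U, pd k (ψ i j) x = γ i k x * ψ k j x)
    (hψsum : ∀ i j, ∀ x ∈ U, ∑ k, pd k (ψ i j) x = 0)
    (x₀ : Fin n → ℝ) (hx₀ : x₀ ∈ U)
    (h0 : ∀ α β, ∑ i, ψ i α x₀ * ψ i β x₀ = if α = β then 1 else 0) :
    ∀ u ∈ U, ∀ α β, ∑ i, ψ i α u * ψ i β u = if α = β then 1 else 0 := by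
  intro u hu α β
  set f : (Fin n → ℝ) → ℝ := fun x => ∑ i, ψ i α x * ψ i β x with hf
  have hdiff : ∀ x ∈ U, DifferentiableAt ℝ f x := fun x hx =>
    DifferentiableAt.fun_sum fun i _ => (hψdiff i α x hx).mul (hψdiff i β x hx)
  -- the diagonal derivative
  have hdiag : ∀ (k : Fin n) (δ : Fin n), ∀ x ∈ U,
      pd k (ψ k δ) x = -∑ i ∈ univ.erase k, γ i k x * ψ i δ x := by
    intro k δ x hx
    have h1 : ∑ j, pd j (ψ k δ) x = 0 := hψsum k δ x hx
    rw [← Finset.sum_erase_add _ _ (Finset.mem_univ k)] at h1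
    have h2 : ∑ j ∈ univ.erase k, pd j (ψ k δ) x
        = ∑ i ∈ univ.erase k, γ i k x * ψ i δ x := by
      refine Finset.sum_congr rfl fun j hj => ?_
      have hjk : j ≠ k := Finset.ne_of_mem_erase hj
      rw [hψ k δ j hjk x hx, hsymm k j (Ne.symm hjk) x hx]
    linarith [h1, h2]
  -- all partial derivatives of f vanish
  have hpd : ∀ (k : Fin n), ∀ x ∈ U, pd k f x = 0 := by
    intro k x hx
    have hfd : pd k f x = ∑ i, (ψ i α x * pd k (ψ i β) x + ψ i β x * pd k (ψ i α) x) := by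
      unfold pd
      rw [hf]
      rw [fderiv_fun_sum (A := fun i y => ψ i α y * ψ i β y) fun i _ => (hψdiff i α x hx).mul (hψdiff i β x hx)]
      rw [ContinuousLinearMap.sum_apply]
      refine Finset.sum_congr rfl fun i _ => ?_
      rw [fderiv_fun_mul (hψdiff i α x hx) (hψdiff i β x hx)]
      simp [pd, mul_comm]
    rw [hfd, ← Finset.sum_erase_add _ _ (Finset.mem_univ k)]
    have hoff : ∑ i ∈ univ.erase k, (ψ i α x * pd k (ψ i β) x + ψ i β x * pd k (ψ i α) x)
        = ∑ i ∈ univ.erase k, γ i k x * (ψ i α x * ψ k β x + ψ i β x * ψ k α x) := by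
      refine Finset.sum_congr rfl fun i hi => ?_
      have hik : i ≠ k := Finset.ne_of_mem_erase hi
      rw [hψ i β k (Ne.symm hik) x hx, hψ i α k (Ne.symm hik) x hx]
      ring
    rw [hoff, hdiag k α x hx, hdiag k β x hx]
    have hterm : ∀ i ∈ univ.erase k, γ i k x * (ψ i α x * ψ k β x + ψ i β x * ψ k α x)
        = ψ k α x * (γ i k x * ψ i β x) + ψ k β x * (γ i k x * ψ i α x) := fun i _ => by ring
    rw [Finset.sum_congr rfl hterm, Finset.sum_add_distrib, ← Finset.mul_sum, ← Finset.mul_sum]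
    ring
  have hzero : ∀ x ∈ U, fderiv ℝ f x = 0 := fun x hx =>
    clm_eq_zero_of_single _ fun k => hpd k x hx
  have := const_of_fderiv_zero hU hconn f hdiff hzero hx₀ u hu
  rw [hf] at this
  simpa [this] using h0 α β

end
end

section
/- If structure constants are defined by c_{αβ}^γ = Σ_i ψ_{iα}ψ_{iβ}ψ_{iγ}/ψ_{i1} with ψ_{i1} ≠ 0 and Σ_i ψ_{iα}ψ_{iβ} = δ_{αβ}, then the multiplication with these structure constants is associative: Σ_k c_{αβ}^k c_{kγ}^δ = Σ_k c_{βγ}^k c_{αk}^δ, and c_{1β}^γ = δ_{βγ} (so e_1 is a unit). -/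
open Finset Matrix

/-! Since `ψ` is square, its rows are orthonormal as well, so contracting over `k` collapses
`Σ_k c_{αβ}^k c_{kγ}^δ` to `Σ_i ψ_{iα} ψ_{iβ} ψ_{iγ} ψ_{iδ} / ψ_{i1}²`, which is symmetric in all
four indices. The unit property is the orthonormality of the columns once `ψ_{i1}` cancels
against the weight `1/ψ_{i1}`. -/

variable {m n R : Type*} [Fintype m] [CommRing R]

def structureConstants (ψ : Matrix m n R) (w : m → R) (α β γ : n) : R :=
  ∑ i, ψ i α * ψ i β * ψ i γ * w i

theorem structureConstants_eq_vecMul (ψ : Matrix m n R) (w : m → R) (α β : n) :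
    structureConstants ψ w α β = (fun i ↦ ψ i α * ψ i β * w i) ᵥ* ψ := by
  ext γ
  simp only [structureConstants, vecMul, dotProduct]
  exact sum_congr rfl fun i _ ↦ by ring

theorem vecMul_dotProduct_vecMul_of_mul_transpose_eq_one [Fintype n] [DecidableEq m]
    {ψ : Matrix m n R} (h : ψ * ψᵀ = 1) (a b : m → R) : a ᵥ* ψ ⬝ᵥ b ᵥ* ψ = a ⬝ᵥ b := by
  rw [← dotProduct_mulVec, ← vecMul_transpose, vecMul_vecMul, h, vecMul_one]

theorem structureConstants_comm (ψ : Matrix m n R) (w : m → R) (α β γ : n) :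
    structureConstants ψ w α β γ = structureConstants ψ w β α γ :=
  sum_congr rfl fun i _ ↦ by ring

theorem structureConstants_comm_right (ψ : Matrix m n R) (w : m → R) (α β γ : n) :
    structureConstants ψ w α β γ = structureConstants ψ w α γ β :=
  sum_congr rfl fun i _ ↦ by ring

theorem sum_structureConstants_mul [Fintype n] [DecidableEq m] {ψ : Matrix m n R}
    (h : ψ * ψᵀ = 1) (w : m → R) (α β γ δ : n) :
    ∑ k, structureConstants ψ w α β k * structureConstants ψ w k γ δ =
      ∑ i, ψ i α * ψ i β * ψ i γ * ψ i δ * w i ^ 2 := by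
  calc ∑ k, structureConstants ψ w α β k * structureConstants ψ w k γ δ
      = structureConstants ψ w α β ⬝ᵥ structureConstants ψ w γ δ :=
        sum_congr rfl fun k _ ↦ by
          rw [structureConstants_comm ψ w k, structureConstants_comm_right ψ w γ k]
    _ = _ := by
        rw [structureConstants_eq_vecMul, structureConstants_eq_vecMul,
          vecMul_dotProduct_vecMul_of_mul_transpose_eq_one h, dotProduct]
        exact sum_congr rfl fun i _ ↦ by ring

theorem structureConstants_assoc [Fintype n] [DecidableEq m] {ψ : Matrix m n R}
    (h : ψ * ψᵀ = 1) (w : m → R) (α β γ δ : n) :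
    ∑ k, structureConstants ψ w α β k * structureConstants ψ w k γ δ =
      ∑ k, structureConstants ψ w β γ k * structureConstants ψ w α k δ := by
  simp only [structureConstants_comm ψ w α, sum_structureConstants_mul h]
  exact sum_congr rfl fun i _ ↦ by ring

theorem structureConstants_unit [DecidableEq n] {ψ : Matrix m n R} (h : ψᵀ * ψ = 1) {w : m → R}
    {e : n} (hw : ∀ i, ψ i e * w i = 1) (β γ : n) :
    structureConstants ψ w e β γ = (1 : Matrix n n R) β γ := by
  rw [← h, mul_apply]
  simp only [transpose_apply]
  exact sum_congr rfl fun i _ ↦ by linear_combination ψ i β * ψ i γ * hw i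

/-- Let `ψ ∈ Mat_n(ℝ)` have orthonormal columns (`Σ_i ψ_{iα} ψ_{iβ} = δ_{αβ}`)
and nonvanishing first-column entries `ψ_{i1} ≠ 0` (the index `1` is
`0 : Fin n`).  Then the structure constants
`c_{αβ}^γ = Σ_i ψ_{iα} ψ_{iβ} ψ_{iγ} / ψ_{i1}` define an associative
multiplication, `Σ_k c_{αβ}^k c_{kγ}^δ = Σ_k c_{βγ}^k c_{αk}^δ`, with unit
`e_1`: `c_{1β}^γ = δ_{βγ}`. -/
theorem structure_constants_associative_with_unit
    (n : ℕ) [NeZero n] (ψ : Matrix (Fin n) (Fin n) ℝ)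
    (horth : ∀ α β, ∑ i, ψ i α * ψ i β = if α = β then (1:ℝ) else 0)
    (hne : ∀ i, ψ i 0 ≠ 0)
    (c : Fin n → Fin n → Fin n → ℝ)
    (hc : ∀ α β γ, c α β γ = ∑ i, ψ i α * ψ i β * ψ i γ / ψ i 0) :
    (∀ α β γ δ, ∑ k, c α β k * c k γ δ = ∑ k, c β γ k * c α k δ) ∧
    (∀ β γ, c 0 β γ = if β = γ then 1 else 0) := by
  have hcols : ψᵀ * ψ = 1 := by
    ext α β
    simp only [mul_apply, transpose_apply, horth, one_apply]
  have hrows : ψ * ψᵀ = 1 := mul_eq_one_comm.mp hcols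
  obtain rfl : c = structureConstants ψ fun i ↦ (ψ i 0)⁻¹ := by
    ext α β γ
    simp only [hc, structureConstants, div_eq_mul_inv]
  refine ⟨structureConstants_assoc hrows _, fun β γ ↦ ?_⟩
  rw [structureConstants_unit hcols fun i ↦ mul_inv_cancel₀ (hne i), one_apply]
end

section
/- Let w_{ij}(x) be smooth functions satisfying ∂w_{ij}/∂x_k = w_{ik} w_{kj} for i ≠ k ≠ j, Σ_{k=1}^n ∂w_{ij}/∂x_k = 0, and the symmetry w_{ij}(x with sign-flipped even variables restricted) = w_{ji}. Then the restrictions γ_{ij}(u) = w_{ij}|_{even times = 0} with u_i = x_1^(i) satisfy the full Darboux–Egoroff system: γ_{ij} = γ_{ji}, ∂_k γ_{ij} = γ_{ik}γ_{kj} (distinct i,j,k), and Σ_k ∂_k γ_{ij} = 0. -/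
open Finset

noncomputable section

/-- Index type for the higher times `x_k^{(i)}`, `k ≥ 2`, of the `n`-component
KP hierarchy; the first times `x_1^{(i)}` are collected separately in
`Fin n → ℝ`. -/
def HigherTimes (n : ℕ) : Type := ({k : ℕ // 2 ≤ k} × Fin n) → ℝ

/-- The sign flip `x_k^{(a)} ↦ (−1)^{k+1} x_k^{(a)}` on the higher times
(the variables with even `k` are negated; `x_1` is unchanged). -/
def flipEven {n : ℕ} (r : HigherTimes n) : HigherTimes n :=
  fun p => if Even (p.1 : ℕ) then -r p else r p

/-- Setting the even times `x_{2k}^{(ℓ)}` to zero. -/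
def zeroEven {n : ℕ} (r : HigherTimes n) : HigherTimes n :=
  fun p => if Even (p.1 : ℕ) then 0 else r p

/-- Let `w_{ij}(x)` (`i ≠ j`) be smooth functions of the times
`x = (x_k^{(i)})` satisfying `∂w_{ij}/∂x_1^{(k)} = w_{ik} w_{kj}` for
`i ≠ k ≠ j`, `Σ_k ∂w_{ij}/∂x_1^{(k)} = 0`, and the symmetry
`w_{ij}((−1)^{k+1} x_k^{(a)}) = w_{ji}(x_k^{(a)})`.  Then the restrictions
`γ_{ij}(u) = w_{ij}|_{x_{2k}^{(ℓ)} = 0}`, with `u_i = x_1^{(i)}`, satisfy the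
full Darboux–Egoroff system:  `γ_{ij} = γ_{ji}`,
`∂_k γ_{ij} = γ_{ik} γ_{kj}` for distinct `i,j,k`, and `Σ_k ∂_k γ_{ij} = 0`. -/
theorem restricted_w_solves_darboux_egoroff
    (n : ℕ) (w : Fin n → Fin n → (Fin n → ℝ) → HigherTimes n → ℝ)
    (hdiff : ∀ i j r, i ≠ j → Differentiable ℝ (fun u => w i j u r))
    (hDE : ∀ i j k, i ≠ j → i ≠ k → k ≠ j →
      ∀ (u : Fin n → ℝ) (r : HigherTimes n),
        fderiv ℝ (fun u' => w i j u' r) u (Pi.single k 1) =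
          w i k u r * w k j u r)
    (hsum : ∀ i j, i ≠ j → ∀ (u : Fin n → ℝ) (r : HigherTimes n),
      ∑ k, fderiv ℝ (fun u' => w i j u' r) u (Pi.single k 1) = 0)
    (hflip : ∀ i j, i ≠ j → ∀ (u : Fin n → ℝ) (r : HigherTimes n),
      w i j u (flipEven r) = w j i u r) :
    ∀ (r : HigherTimes n),
      (∀ i j, i ≠ j → ∀ u, w i j u (zeroEven r) = w j i u (zeroEven r)) ∧
      (∀ i j k, i ≠ j → i ≠ k → k ≠ j → ∀ u,
        fderiv ℝ (fun u' => w i j u' (zeroEven r)) u (Pi.single k 1) =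
          w i k u (zeroEven r) * w k j u (zeroEven r)) ∧
      (∀ i j, i ≠ j → ∀ u,
        ∑ k, fderiv ℝ (fun u' => w i j u' (zeroEven r)) u (Pi.single k 1)
          = 0) := by
  intro r
  have hfix : flipEven (zeroEven r) = zeroEven r := by
    funext p
    simp only [flipEven, zeroEven]
    by_cases h : Even (p.1 : ℕ) <;> simp [h]
  refine ⟨fun i j hij u => ?_, fun i j k h1 h2 h3 u => hDE i j k h1 h2 h3 u _,
    fun i j hij u => hsum i j hij u _⟩
  rw [← hflip j i hij.symm u (zeroEven r), hfix]

end
end
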